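/- arXiv:2504.05161 — 3 statements merged into one kernel-verified Lean document; each statement's English description precedes it below -/
import Mathlib

section
/- For any probability measure P on ℝ^d with finite second moment, any point x₀ ∈ ℝ^d, and any time T > 0, the KL divergence between the Gaussian Q_{T|0}(·|x₀) = N(e^{-T} x₀, (1-e^{-2T}) Id) and P_T (the law of the OU process at time T started from P) satisfies KL(Q_{T|0}(·|x₀) ‖ P_T) ≤ (‖x₀‖² + ∫‖x‖² dP(x)) / (e^{2T} − 1). -/
open MeasureTheory Real

/-- Density of the Gaussian `N(μ, v · Id)` on `ℝ^d`. -/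
noncomputable def gaussDensity (d : ℕ) (μ : EuclideanSpace ℝ (Fin d)) (v : ℝ)
    (x : EuclideanSpace ℝ (Fin d)) : ℝ :=
  (2 * Real.pi * v) ^ (-(d : ℝ) / 2) * Real.exp (-‖x - μ‖ ^ 2 / (2 * v))

/-- Density of the law at time `t` of the OU process started from `P`:
`P_t = Law(e^{-t} X₀ + √(1-e^{-2t}) Z)`, `X₀ ~ P`, `Z ~ N(0, Id)`. -/
noncomputable def ouMarginalDensity (d : ℕ) (P : Measure (EuclideanSpace ℝ (Fin d))) (t : ℝ)
    (x : EuclideanSpace ℝ (Fin d)) : ℝ :=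
  ∫ x₀, gaussDensity d (Real.exp (-t) • x₀) (1 - Real.exp (-2 * t)) x ∂P

/-!
`ouMarginalDensity d P T` is the mixture over `x ~ P` of the Gaussian densities `N(e^{-T} x, v Id)`,
`v = 1 - e^{-2T}`. By concavity of `log`, `log (q / p_T) ≤ ∫ log (q / q_x) dP(x)` pointwise, and
the log-likelihood ratio of two Gaussians with the same covariance is affine, with mean
`‖m - μ‖² / (2v)` under `q = N(m, v Id)`. Hence `KL(q ‖ p_T) ≤ ∫ KL(q ‖ q_x) dP(x)
= e^{-2T} ∫ ‖x₀ - x‖² dP(x) / (2v)`, and `‖x₀ - x‖² ≤ 2‖x₀‖² + 2‖x‖²` (the triangle inequality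
`W₂(δ_{x₀}, P) ≤ ‖x₀‖ + W₂(δ₀, P)`) gives the bound.
-/

open scoped RealInnerProductSpace

section GaussianFunction

variable {V : Type*} [NormedAddCommGroup V] [InnerProductSpace ℝ V] [FiniteDimensional ℝ V]
  [MeasurableSpace V] [BorelSpace V] {b : ℝ}

lemma integrable_rexp_neg_mul_sq_norm_add (hb : 0 < b) (c : ℝ) (w : V) :
    Integrable (fun v : V => rexp (-b * ‖v‖ ^ 2 + c * ⟪w, v⟫)) := by
  convert (GaussianFourier.integrable_cexp_neg_mul_sq_norm_add (V := V) (b := b)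
    (by simpa using hb) c w).norm using 2 with v
  rw [Complex.norm_exp]
  norm_cast

lemma integrable_inner_mul_rexp_neg_mul_sq_norm (hb : 0 < b) (w : V) :
    Integrable (fun v : V => ⟪w, v⟫ * rexp (-b * ‖v‖ ^ 2)) := by
  refine ((integrable_rexp_neg_mul_sq_norm_add hb 1 w).add
    (integrable_rexp_neg_mul_sq_norm_add hb (-1) w)).mono' (by fun_prop)
    (.of_forall fun v => ?_)
  have habs : |⟪w, v⟫| ≤ rexp ⟪w, v⟫ + rexp (-⟪w, v⟫) := by
    rcases abs_cases ⟪w, v⟫ with ⟨h, -⟩ | ⟨h, -⟩ <;> rw [h] <;>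
      linarith [add_one_le_exp ⟪w, v⟫, add_one_le_exp (-⟪w, v⟫), exp_pos ⟪w, v⟫,
        exp_pos (-⟪w, v⟫)]
  simp only [Pi.add_apply, norm_mul, norm_eq_abs, abs_exp, one_mul, neg_one_mul, exp_add]
  nlinarith [exp_pos (-b * ‖v‖ ^ 2)]

lemma integral_inner_mul_rexp_neg_mul_sq_norm (w : V) :
    ∫ v : V, ⟪w, v⟫ * rexp (-b * ‖v‖ ^ 2) = 0 := by
  have hodd := integral_neg_eq_self (fun v : V => ⟪w, v⟫ * rexp (-b * ‖v‖ ^ 2)) volume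
  simp only [inner_neg_right, norm_neg, neg_mul, integral_neg] at hodd ⊢
  linarith

end GaussianFunction

section GaussDensity

variable {d : ℕ} {v : ℝ}

lemma gaussDensity_eq (μ x : EuclideanSpace ℝ (Fin d)) :
    gaussDensity d μ v x = (2 * π * v) ^ (-(d : ℝ) / 2) * rexp (-(2 * v)⁻¹ * ‖x - μ‖ ^ 2) := by
  rw [gaussDensity]
  congr 2
  ring

lemma gaussDensity_pos (hv : 0 < v) (μ x : EuclideanSpace ℝ (Fin d)) :
    0 < gaussDensity d μ v x := by
  unfold gaussDensity
  positivity

lemma gaussDensity_le (hv : 0 < v) (μ x : EuclideanSpace ℝ (Fin d)) :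
    gaussDensity d μ v x ≤ (2 * π * v) ^ (-(d : ℝ) / 2) := by
  rw [gaussDensity]
  refine mul_le_of_le_one_right (by positivity) (exp_le_one_iff.2 ?_)
  exact div_nonpos_of_nonpos_of_nonneg (neg_nonpos.2 (by positivity)) (by positivity)

lemma log_gaussDensity (hv : 0 < v) (μ x : EuclideanSpace ℝ (Fin d)) :
    log (gaussDensity d μ v x) = log ((2 * π * v) ^ (-(d : ℝ) / 2)) - ‖x - μ‖ ^ 2 / (2 * v) := by
  rw [gaussDensity, log_mul (by positivity) (exp_pos _).ne', log_exp]
  ring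

lemma log_gaussDensity_sub_log_gaussDensity (hv : 0 < v) (m μ x : EuclideanSpace ℝ (Fin d)) :
    log (gaussDensity d m v x) - log (gaussDensity d μ v x) =
      (‖m - μ‖ ^ 2 + 2 * ⟪x - m, m - μ⟫) / (2 * v) := by
  rw [log_gaussDensity hv, log_gaussDensity hv, ← sub_add_sub_cancel x m μ, norm_add_sq_real]
  ring

lemma integrable_gaussDensity (hv : 0 < v) (μ : EuclideanSpace ℝ (Fin d)) :
    Integrable (gaussDensity d μ v) := by
  simp_rw [funext (gaussDensity_eq μ)]
  have h := integrable_rexp_neg_mul_sq_norm_add (V := EuclideanSpace ℝ (Fin d))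
    (inv_pos.2 (mul_pos two_pos hv)) 0 0
  simp only [zero_mul, add_zero] at h
  exact (h.const_mul _).comp_sub_right μ

lemma integral_gaussDensity (hv : 0 < v) (μ : EuclideanSpace ℝ (Fin d)) :
    ∫ x, gaussDensity d μ v x = 1 := by
  simp_rw [gaussDensity_eq μ]
  rw [integral_sub_right_eq_self (fun y => (2 * π * v) ^ (-(d : ℝ) / 2) *
      rexp (-(2 * v)⁻¹ * ‖y‖ ^ 2)) μ, integral_const_mul,
    GaussianFourier.integral_rexp_neg_mul_sq_norm (inv_pos.2 (mul_pos two_pos hv)),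
    finrank_euclideanSpace_fin, div_inv_eq_mul, ← mul_assoc, mul_comm π 2, neg_div,
    rpow_neg (by positivity), inv_mul_cancel₀ (by positivity)]

lemma gaussDensity_mul_inner_eq (m w x : EuclideanSpace ℝ (Fin d)) :
    gaussDensity d m v x * ⟪x - m, w⟫ =
      (2 * π * v) ^ (-(d : ℝ) / 2) * (⟪w, x - m⟫ * rexp (-(2 * v)⁻¹ * ‖x - m‖ ^ 2)) := by
  rw [gaussDensity_eq, real_inner_comm]
  ring

lemma integrable_gaussDensity_mul_inner (hv : 0 < v) (m w : EuclideanSpace ℝ (Fin d)) :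
    Integrable (fun x => gaussDensity d m v x * ⟪x - m, w⟫) := by
  simp_rw [gaussDensity_mul_inner_eq]
  exact ((integrable_inner_mul_rexp_neg_mul_sq_norm (inv_pos.2 (mul_pos two_pos hv)) w).const_mul
    _).comp_sub_right m

lemma integral_gaussDensity_mul_inner (m w : EuclideanSpace ℝ (Fin d)) :
    ∫ x, gaussDensity d m v x * ⟪x - m, w⟫ = 0 := by
  simp_rw [gaussDensity_mul_inner_eq]
  rw [integral_const_mul,
    integral_sub_right_eq_self (fun y => ⟪w, y⟫ * rexp (-(2 * v)⁻¹ * ‖y‖ ^ 2)) m,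
    integral_inner_mul_rexp_neg_mul_sq_norm, mul_zero]

end GaussDensity

section Jensen

variable {α : Type*} [MeasurableSpace α] {P : Measure α} [IsProbabilityMeasure P] {f : α → ℝ}

lemma integral_pos_of_forall_pos (hf : ∀ a, 0 < f a) (hfi : Integrable f P) :
    0 < ∫ a, f a ∂P := by
  rw [integral_pos_iff_support_of_nonneg (fun a => (hf a).le) hfi,
    Function.support_eq_univ fun a => (hf a).ne']
  simp

-- `ConcaveOn.le_map_integral` needs a closed domain, which `log` lacks; the tangent line at
-- `∫ f` does the job instead.
lemma integral_log_le_log_integral (hf : ∀ a, 0 < f a) (hfi : Integrable f P)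
    (hlog : Integrable (fun a => log (f a)) P) :
    ∫ a, log (f a) ∂P ≤ log (∫ a, f a ∂P) := by
  set p := ∫ a, f a ∂P
  have hp : 0 < p := integral_pos_of_forall_pos hf hfi
  have htangent : ∀ a, log (f a) ≤ log p + (f a - p) / p := fun a => by
    have h := log_le_sub_one_of_pos (div_pos (hf a) hp)
    rw [log_div (hf a).ne' hp.ne'] at h
    rw [sub_div, div_self hp.ne']
    linarith
  have hdev : Integrable (fun a => (f a - p) / p) P := (hfi.sub (integrable_const p)).div_const p
  calc ∫ a, log (f a) ∂P ≤ ∫ a, (log p + (f a - p) / p) ∂P :=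
        integral_mono hlog ((integrable_const _).add hdev) htangent
    _ = log p := by
        rw [integral_add (integrable_const _) hdev, integral_div,
          integral_sub hfi (integrable_const p)]
        simp [p]

end Jensen

noncomputable def gaussMixtureDensity {α : Type*} [MeasurableSpace α] (d : ℕ) (P : Measure α)
    (c : α → EuclideanSpace ℝ (Fin d)) (v : ℝ) (x : EuclideanSpace ℝ (Fin d)) : ℝ :=
  ∫ a, gaussDensity d (c a) v x ∂P

section GaussMixture

variable {d : ℕ} {v : ℝ} {α : Type*} [MeasurableSpace α] {P : Measure α}
  [IsProbabilityMeasure P] {c : α → EuclideanSpace ℝ (Fin d)}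

lemma log_gaussDensity_div_gaussMixtureDensity_le (hv : 0 < v) (hc : MemLp c 2 P)
    (m x : EuclideanSpace ℝ (Fin d)) :
    log (gaussDensity d m v x / gaussMixtureDensity d P c v x) ≤
      (∫ a, ‖m - c a‖ ^ 2 ∂P + 2 * ⟪x - m, m - ∫ a, c a ∂P⟫) / (2 * v) := by
  have hc₁ : Integrable c P := hc.integrable one_le_two
  have hsq : Integrable (fun a => ‖m - c a‖ ^ 2) P :=
    ((memLp_const m).sub hc).integrable_norm_pow two_ne_zero
  have hdiff : Integrable (fun a => m - c a) P := (integrable_const m).sub hc₁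
  have hinner : Integrable (fun a => ⟪x - m, m - c a⟫) P := hdiff.const_inner (x - m)
  set r := fun a => (‖m - c a‖ ^ 2 + 2 * ⟪x - m, m - c a⟫) / (2 * v)
  have hr : Integrable r P := (hsq.add (hinner.const_mul 2)).div_const _
  have hlog : ∀ a, log (gaussDensity d (c a) v x) = log (gaussDensity d m v x) - r a := fun a => by
    linarith [log_gaussDensity_sub_log_gaussDensity hv m (c a) x]
  have hf : Integrable (fun a => gaussDensity d (c a) v x) P :=
    (integrable_const ((2 * π * v) ^ (-(d : ℝ) / 2))).mono'
      ((by unfold gaussDensity; fun_prop : Continuous fun μ => gaussDensity d μ v x)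
        |>.comp_aestronglyMeasurable hc₁.aestronglyMeasurable)
      (.of_forall fun a => by
        rw [norm_of_nonneg (gaussDensity_pos hv _ x).le]
        exact gaussDensity_le hv _ x)
  have hjensen := integral_log_le_log_integral (fun a => gaussDensity_pos hv (c a) x) hf
    (by simp_rw [hlog]; exact (integrable_const _).sub hr)
  have hmean : ∫ a, r a ∂P =
      (∫ a, ‖m - c a‖ ^ 2 ∂P + 2 * ⟪x - m, m - ∫ a, c a ∂P⟫) / (2 * v) := by
    rw [integral_div, integral_add hsq (hinner.const_mul 2), integral_const_mul,
      integral_inner hdiff, integral_sub (integrable_const m) hc₁]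
    simp
  simp_rw [hlog] at hjensen
  rw [integral_sub (integrable_const _) hr, hmean] at hjensen
  rw [gaussMixtureDensity, log_div (gaussDensity_pos hv m x).ne'
    (integral_pos_of_forall_pos (fun a => gaussDensity_pos hv (c a) x) hf).ne']
  simp only [integral_const, probReal_univ, one_smul] at hjensen
  linarith

theorem integral_gaussDensity_mul_log_div_gaussMixtureDensity_le (hv : 0 < v)
    (hc : MemLp c 2 P) (m : EuclideanSpace ℝ (Fin d)) :
    ∫ x, gaussDensity d m v x * log (gaussDensity d m v x / gaussMixtureDensity d P c v x) ≤
      (∫ a, ‖m - c a‖ ^ 2 ∂P) / (2 * v) := by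
  set C := (∫ a, ‖m - c a‖ ^ 2 ∂P) / (2 * v)
  set b := v⁻¹ • (m - ∫ a, c a ∂P)
  have hbound : ∀ x, gaussDensity d m v x * log (gaussDensity d m v x /
      gaussMixtureDensity d P c v x) ≤
        C * gaussDensity d m v x + gaussDensity d m v x * ⟪x - m, b⟫ := fun x => by
    refine (mul_le_mul_of_nonneg_left (log_gaussDensity_div_gaussMixtureDensity_le hv hc m x)
      (gaussDensity_pos hv m x).le).trans_eq ?_
    rw [inner_smul_right]
    simp only [C]
    field_simp
  have hmass := (integrable_gaussDensity hv m).const_mul C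
  have hlin := integrable_gaussDensity_mul_inner hv m b
  -- A non-integrable integrand has Bochner integral `0`, and `C ≥ 0`.
  by_cases hkl : Integrable (fun x => gaussDensity d m v x *
      log (gaussDensity d m v x / gaussMixtureDensity d P c v x))
  · calc _ ≤ ∫ x, (C * gaussDensity d m v x + gaussDensity d m v x * ⟪x - m, b⟫) :=
          integral_mono hkl (hmass.add hlin) hbound
      _ = C := by
          rw [integral_add hmass hlin, integral_const_mul, integral_gaussDensity hv,
            integral_gaussDensity_mul_inner, mul_one, add_zero]
  · rw [integral_undef hkl]
    exact div_nonneg (integral_nonneg fun a => by positivity) (by positivity)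

end GaussMixture

lemma integral_norm_sub_sq_le {E : Type*} [NormedAddCommGroup E] [MeasurableSpace E]
    [OpensMeasurableSpace E] {P : Measure E} [IsProbabilityMeasure P]
    (hmom : Integrable (fun x => ‖x‖ ^ 2) P) (x₀ : E) :
    ∫ x, ‖x₀ - x‖ ^ 2 ∂P ≤ 2 * (‖x₀‖ ^ 2 + ∫ x, ‖x‖ ^ 2 ∂P) := by
  have hpt : ∀ x : E, ‖x₀ - x‖ ^ 2 ≤ 2 * ‖x₀‖ ^ 2 + 2 * ‖x‖ ^ 2 := fun x =>
    calc ‖x₀ - x‖ ^ 2 ≤ (‖x₀‖ + ‖x‖) ^ 2 := by gcongr; exact norm_sub_le x₀ x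
      _ ≤ 2 * ‖x₀‖ ^ 2 + 2 * ‖x‖ ^ 2 := by linarith [add_sq_le (a := ‖x₀‖) (b := ‖x‖)]
  have hdom : Integrable (fun x => 2 * ‖x₀‖ ^ 2 + 2 * ‖x‖ ^ 2) P :=
    (integrable_const _).add (hmom.const_mul 2)
  calc ∫ x, ‖x₀ - x‖ ^ 2 ∂P ≤ ∫ x, (2 * ‖x₀‖ ^ 2 + 2 * ‖x‖ ^ 2) ∂P :=
        integral_mono_of_nonneg (.of_forall fun x => by positivity) hdom (.of_forall hpt)
    _ = 2 * (‖x₀‖ ^ 2 + ∫ x, ‖x‖ ^ 2 ∂P) := by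
        rw [integral_add (integrable_const _) (hmom.const_mul 2), integral_const,
          integral_const_mul, probReal_univ, one_smul]
        ring

lemma ouMarginalDensity_eq_gaussMixtureDensity (d : ℕ) (P : Measure (EuclideanSpace ℝ (Fin d)))
    (t : ℝ) : ouMarginalDensity d P t =
      gaussMixtureDensity d P (fun x => rexp (-t) • x) (1 - rexp (-2 * t)) :=
  rfl

/-- The KL divergence between the OU transition kernel `Q_{T|0}(·|x₀)` and the
OU marginal `P_T` is at most `(‖x₀‖² + ∫‖x‖² dP) / (e^{2T} - 1)`. -/
theorem kl_transition_marginal_le (d : ℕ) (P : Measure (EuclideanSpace ℝ (Fin d)))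
    [IsProbabilityMeasure P] (hmom : Integrable (fun x => ‖x‖ ^ 2) P)
    (x₀ : EuclideanSpace ℝ (Fin d)) (T : ℝ) (hT : 0 < T) :
    (∫ x, gaussDensity d (Real.exp (-T) • x₀) (1 - Real.exp (-2 * T)) x *
        Real.log (gaussDensity d (Real.exp (-T) • x₀) (1 - Real.exp (-2 * T)) x /
          ouMarginalDensity d P T x)) ≤
      (‖x₀‖ ^ 2 + ∫ x, ‖x‖ ^ 2 ∂P) / (Real.exp (2 * T) - 1) := by
  have hv : 0 < 1 - rexp (-2 * T) := sub_pos.2 (exp_lt_one_iff.2 (by linarith))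
  have hX : MemLp (fun x : EuclideanSpace ℝ (Fin d) => x) 2 P :=
    (memLp_two_iff_integrable_sq_norm aestronglyMeasurable_id).2 hmom
  have hscale : ∀ x, ‖rexp (-T) • x₀ - rexp (-T) • x‖ ^ 2 = rexp (-2 * T) * ‖x₀ - x‖ ^ 2 :=
    fun x => by
      rw [← smul_sub, norm_smul, norm_of_nonneg (exp_pos _).le, mul_pow, ← exp_nat_mul]
      ring_nf
  have hexp : rexp (-2 * T) * rexp (2 * T) = 1 := by rw [← exp_add]; simp
  rw [ouMarginalDensity_eq_gaussMixtureDensity]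
  calc _ ≤ (∫ x, ‖rexp (-T) • x₀ - rexp (-T) • x‖ ^ 2 ∂P) / (2 * (1 - rexp (-2 * T))) :=
        integral_gaussDensity_mul_log_div_gaussMixtureDensity_le hv (hX.const_smul (rexp (-T))) _
    _ = rexp (-2 * T) * (∫ x, ‖x₀ - x‖ ^ 2 ∂P) / (2 * (1 - rexp (-2 * T))) := by
        simp_rw [hscale, integral_const_mul]
    _ ≤ rexp (-2 * T) * (2 * (‖x₀‖ ^ 2 + ∫ x, ‖x‖ ^ 2 ∂P)) / (2 * (1 - rexp (-2 * T))) := by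
        gcongr
        exact integral_norm_sub_sq_le hmom x₀
    _ = _ := by
        have : rexp (2 * T) - 1 ≠ 0 := sub_ne_zero.2 (one_lt_exp_iff.2 (by linarith)).ne'
        rw [div_eq_div_iff (by positivity) this]
        linear_combination 2 * (‖x₀‖ ^ 2 + ∫ x, ‖x‖ ^ 2 ∂P) * hexp
end

section
/- Let L ≥ 1 and 0 < τ ≤ 1 ≤ T, and for t > 0 set L_t = min{L·e^{2t}, 1/(1−e^{-2t})}. Then there is a universal constant C such that ∫_τ^T L_t dt ≤ C·(T + log(1/(τ + 1/L))). -/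
open Real

/-- For `t > 0`, `1/(1-e^{-2t}) ≤ 1 + 1/(2t)`. -/
lemma aux_recip_bound (t : ℝ) (ht : 0 < t) :
    1 / (1 - Real.exp (-2 * t)) ≤ 1 + 1 / (2 * t) := by
  have hE1 : Real.exp (-2 * t) < 1 := by rw [Real.exp_lt_one_iff]; linarith
  have hEpos : 0 < Real.exp (-2 * t) := Real.exp_pos _
  have hd : 0 < 1 - Real.exp (-2 * t) := by linarith
  have hmul : Real.exp (-2 * t) * Real.exp (2 * t) = 1 := by
    rw [← Real.exp_add]; norm_num
  have h1 : (1 + 2 * t) ≤ Real.exp (2 * t) := by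
    have := Real.add_one_le_exp (2 * t); linarith
  have hE : Real.exp (-2 * t) * (1 + 2 * t) ≤ 1 := by
    calc Real.exp (-2 * t) * (1 + 2 * t) ≤ Real.exp (-2 * t) * Real.exp (2 * t) := by
          exact mul_le_mul_of_nonneg_left h1 hEpos.le
      _ = 1 := hmul
  rw [div_le_iff₀ hd]
  have key : (1 + 1 / (2 * t)) * (1 - Real.exp (-2 * t)) - 1
      = (1 - Real.exp (-2 * t) * (1 + 2 * t)) / (2 * t) := by
    field_simp; ring
  have hnn : 0 ≤ (1 - Real.exp (-2 * t) * (1 + 2 * t)) / (2 * t) :=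
    div_nonneg (by linarith) (by linarith)
  linarith [key ▸ hnn]

/-- Pointwise bound `L_t ≤ 1 + 2e²/(t + 1/L)`. -/
lemma aux_pt_bound (L t : ℝ) (hL : 1 ≤ L) (ht : 0 < t) :
    min (L * Real.exp (2 * t)) (1 / (1 - Real.exp (-2 * t)))
      ≤ 1 + (2 * Real.exp 2) / (t + 1 / L) := by
  have hL0 : 0 < L := by linarith
  have hc0 : 0 < 1 / L := by positivity
  have he2 : (1:ℝ) ≤ Real.exp 2 := Real.one_le_exp (by norm_num)
  rcases le_or_gt t (1 / L) with h | h
  · refine (min_le_left _ _).trans ?_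
    have ht1 : t ≤ 1 := h.trans ((div_le_one hL0).mpr hL)
    have h1 : L * Real.exp (2 * t) ≤ L * Real.exp 2 :=
      mul_le_mul_of_nonneg_left (Real.exp_le_exp.mpr (by linarith)) hL0.le
    have h2 : L * Real.exp 2 ≤ 2 * Real.exp 2 / (t + 1 / L) := by
      rw [le_div_iff₀ (by linarith)]
      calc L * Real.exp 2 * (t + 1 / L) ≤ L * Real.exp 2 * (2 * (1 / L)) := by
            exact mul_le_mul_of_nonneg_left (by linarith) (by positivity)
        _ = 2 * Real.exp 2 * (L * (1 / L)) := by ring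
        _ = 2 * Real.exp 2 := by rw [mul_one_div_cancel hL0.ne']; ring
    linarith
  · refine (min_le_right _ _).trans ((aux_recip_bound t ht).trans ?_)
    have h3 : 1 / (2 * t) ≤ 2 * Real.exp 2 / (t + 1 / L) := by
      rw [div_le_div_iff₀ (by linarith) (by linarith)]
      nlinarith
    linarith

/-- `∫_τ^T L_t dt ≲ T + log(1/(τ + 1/L))` where `L_t = min{L e^{2t}, 1/(1-e^{-2t})}`. -/
theorem integral_Lt_le : ∃ C : ℝ, 0 < C ∧ ∀ (L τ T : ℝ), 1 ≤ L → 0 < τ → τ ≤ 1 → 1 ≤ T →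
    (∫ t in τ..T, min (L * Real.exp (2 * t)) (1 / (1 - Real.exp (-2 * t)))) ≤
      C * (T + Real.log (1 / (τ + 1 / L))) := by
  refine ⟨100, by norm_num, ?_⟩
  intro L τ T hL hτ hτ1 hT
  have hL0 : 0 < L := by linarith
  set c : ℝ := 1 / L with hc
  have hc0 : 0 < c := by positivity
  have hc1 : c ≤ 1 := (div_le_one hL0).mpr hL
  have hτT : τ ≤ T := hτ1.trans hT
  have hτc : 0 < τ + c := by linarith
  have hTc : 0 < T + c := by linarith
  -- integrability of the min
  have hcont : ContinuousOn
      (fun t => min (L * Real.exp (2 * t)) (1 / (1 - Real.exp (-2 * t)))) (Set.uIcc τ T) := by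
    apply ContinuousOn.inf
    · exact (continuous_const.mul (Real.continuous_exp.comp (continuous_const.mul
        continuous_id))).continuousOn
    · apply ContinuousOn.div continuousOn_const
      · exact (continuous_const.sub (Real.continuous_exp.comp (continuous_const.mul
          continuous_id))).continuousOn
      · intro x hx
        rw [Set.uIcc_of_le hτT] at hx
        have hx0 : 0 < x := lt_of_lt_of_le hτ hx.1
        have : Real.exp (-2 * x) < 1 := by rw [Real.exp_lt_one_iff]; linarith
        exact sub_ne_zero_of_ne (by linarith)
  have hInt1 : IntervalIntegrable
      (fun t => min (L * Real.exp (2 * t)) (1 / (1 - Real.exp (-2 * t))))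
      MeasureTheory.volume τ T := hcont.intervalIntegrable
  -- integrability of the upper bound
  have hcont2 : ContinuousOn (fun t => 1 + 2 * Real.exp 2 / (t + c)) (Set.uIcc τ T) := by
    apply ContinuousOn.add continuousOn_const
    apply ContinuousOn.div continuousOn_const
    · exact (continuous_id.add continuous_const).continuousOn
    · intro x hx
      rw [Set.uIcc_of_le hτT] at hx
      have : 0 < x := lt_of_lt_of_le hτ hx.1
      positivity
  have hInt2 : IntervalIntegrable (fun t => 1 + 2 * Real.exp 2 / (t + c))
      MeasureTheory.volume τ T := hcont2.intervalIntegrable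
  have hcont3 : ContinuousOn (fun t : ℝ => 2 * Real.exp 2 / (t + c)) (Set.uIcc τ T) := by
    apply ContinuousOn.div continuousOn_const
    · exact (continuous_id.add continuous_const).continuousOn
    · intro x hx
      rw [Set.uIcc_of_le hτT] at hx
      have : 0 < x := lt_of_lt_of_le hτ hx.1
      positivity
  -- comparison
  have hmono := intervalIntegral.integral_mono_on hτT hInt1 hInt2
    (fun t ht => aux_pt_bound L t hL (lt_of_lt_of_le hτ ht.1))
  -- compute the upper integral
  have hcomp : (∫ t in τ..T, (1 + 2 * Real.exp 2 / (t + c)))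
      = (T - τ) + 2 * Real.exp 2 * (Real.log (T + c) - Real.log (τ + c)) := by
    rw [intervalIntegral.integral_add (intervalIntegrable_const) hcont3.intervalIntegrable]
    have h1 : (∫ _ in τ..T, (1:ℝ)) = T - τ := by simp
    have h2 : (∫ t in τ..T, 2 * Real.exp 2 / (t + c))
        = 2 * Real.exp 2 * (Real.log (T + c) - Real.log (τ + c)) := by
      have : (∫ t in τ..T, 2 * Real.exp 2 / (t + c))
          = 2 * Real.exp 2 * ∫ t in τ..T, 1 / (t + c) := by
        rw [← intervalIntegral.integral_const_mul]
        congr 1; ext t; ring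
      rw [this, intervalIntegral.integral_comp_add_right (fun x => 1 / x) c,
        integral_one_div, Real.log_div hTc.ne' hτc.ne']
      rw [Set.uIcc_of_le (by linarith)]
      rintro ⟨h1', _⟩
      linarith
    rw [h1, h2]
  rw [hcomp] at hmono
  refine hmono.trans ?_
  -- final numerics
  rw [hc, one_div (τ + 1 / L), Real.log_inv]
  rw [← hc]
  have he2 : Real.exp 2 ≤ 7.4 := by
    have h1 := Real.exp_one_lt_d9
    have h2 : Real.exp 2 = Real.exp 1 * Real.exp 1 := by rw [← Real.exp_add]; norm_num
    nlinarith [Real.exp_pos 1]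
  have he2' : (1:ℝ) ≤ Real.exp 2 := Real.one_le_exp (by norm_num)
  have hlogT : Real.log (T + c) ≤ T := by
    have := Real.log_le_sub_one_of_pos hTc; linarith
  have hlogTpos : 0 < Real.log (T + c) := Real.log_pos (by linarith)
  have hlogτub : Real.log (τ + c) ≤ 0.7 := by
    have h1 : Real.log (τ + c) ≤ Real.log 2 := Real.log_le_log hτc (by linarith)
    have := Real.log_two_lt_d9; linarith
  have hprod : 2 * Real.exp 2 * Real.log (T + c) ≤ 15 * T := by
    nlinarith
  rcases le_or_gt (Real.log (τ + c)) 0 with h | h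
  · nlinarith
  · nlinarith
end

section
/- Let L ≥ 1 and 0 < τ ≤ 1 ≤ T, and for t > 0 set L_t = min{L·e^{2t}, 1/(1−e^{-2t})}. Then there is a universal constant C such that ∫_τ^T L_t² dt ≤ C·(T + 1/(τ + 1/L)). -/
/-!
For `t ≤ 1/L` the first branch of the minimum gives `L_t ≤ L e² ≤ 2e²/(t + 1/L)`, and for
`t ≥ 1/L` the second gives `L_t ≤ 1 + 1/(2t) ≤ 1 + 1/(t + 1/L)`, using `1 + x ≤ eˣ`. Hence
`L_t² ≤ 2 + 8e⁴/(t + 1/L)²` for all `t > 0`, and `1/(t + 1/L)²` integrates to at most `1/(τ + 1/L)`.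
-/

open Real MeasureTheory

theorem integral_one_div_add_sq {a b c : ℝ} (h : ∀ t ∈ Set.uIcc a b, t + c ≠ 0) :
    ∫ t in a..b, 1 / (t + c) ^ 2 = 1 / (a + c) - 1 / (b + c) := by
  have hderiv : ∀ t ∈ Set.uIcc a b, HasDerivAt (fun t => -(t + c)⁻¹) (1 / (t + c) ^ 2) t := by
    intro t ht
    have := (((hasDerivAt_id' t).add_const c).fun_inv (h t ht)).fun_neg
    simpa [neg_div] using this
  have hcont : ContinuousOn (fun t => 1 / (t + c) ^ 2) (Set.uIcc a b) :=
    continuousOn_const.div (by fun_prop) fun t ht => pow_ne_zero 2 (h t ht)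
  rw [intervalIntegral.integral_eq_sub_of_hasDerivAt hderiv hcont.intervalIntegrable]
  ring

theorem one_div_one_sub_exp_neg_le {x : ℝ} (hx : 0 < x) : 1 / (1 - exp (-x)) ≤ 1 + 1 / x := by
  have hexp : exp (-x) ≤ 1 / (1 + x) := by
    rw [exp_neg, ← one_div]
    exact one_div_le_one_div_of_le (by linarith) (by linarith [add_one_le_exp x])
  have hgap : x / (1 + x) ≤ 1 - exp (-x) := by
    have : x / (1 + x) = 1 - 1 / (1 + x) := by field_simp; ring
    linarith
  calc 1 / (1 - exp (-x)) ≤ 1 / (x / (1 + x)) := one_div_le_one_div_of_le (by positivity) hgap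
    _ = 1 + 1 / x := by field_simp; ring

noncomputable def lipConst (L t : ℝ) : ℝ := min (L * exp (2 * t)) (1 / (1 - exp (-2 * t)))

theorem lipConst_pos {L t : ℝ} (hL : 0 < L) (ht : 0 < t) : 0 < lipConst L t := by
  have : exp (-2 * t) < 1 := exp_lt_one_iff.2 (by linarith)
  exact lt_min (by positivity) (one_div_pos.2 (by linarith))

theorem continuousOn_lipConst (L : ℝ) : ContinuousOn (lipConst L) (Set.Ioi 0) := by
  refine ContinuousOn.inf (by fun_prop) (continuousOn_const.div (by fun_prop) fun t ht => ?_)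
  have : exp (-2 * t) < 1 := exp_lt_one_iff.2 (by linarith [Set.mem_Ioi.1 ht])
  linarith

theorem lipConst_le {L t : ℝ} (hL : 1 ≤ L) (ht : 0 < t) :
    lipConst L t ≤ 1 + 2 * exp 2 / (t + 1 / L) := by
  have hL0 : 0 < L := by linarith
  have hta : 0 < t + 1 / L := by positivity
  rcases le_total (L * t) 1 with hLt | hLt
  · have hexp : exp (2 * t) ≤ exp 2 := exp_le_exp.2 (by nlinarith)
    have hL2 : L ≤ 2 / (t + 1 / L) := by
      rw [le_div_iff₀ hta, mul_add, mul_one_div_cancel hL0.ne']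
      linarith
    calc lipConst L t ≤ L * exp (2 * t) := min_le_left _ _
      _ ≤ 2 / (t + 1 / L) * exp 2 := mul_le_mul hL2 hexp (by positivity) (by positivity)
      _ ≤ 1 + 2 * exp 2 / (t + 1 / L) := by rw [div_mul_eq_mul_div]; linarith
  · have h2t : t + 1 / L ≤ 2 * t := by
      have : 1 / L ≤ t := by rw [div_le_iff₀ hL0]; linarith
      linarith
    calc lipConst L t ≤ 1 / (1 - exp (-(2 * t))) := by rw [← neg_mul]; exact min_le_right _ _
      _ ≤ 1 + 1 / (2 * t) := one_div_one_sub_exp_neg_le (by positivity)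
      _ ≤ 1 + 1 / (t + 1 / L) := by gcongr
      _ ≤ 1 + 2 * exp 2 / (t + 1 / L) := by
        gcongr
        linarith [one_le_exp (by norm_num : (0 : ℝ) ≤ 2)]

theorem lipConst_sq_le {L t : ℝ} (hL : 1 ≤ L) (ht : 0 < t) :
    lipConst L t ^ 2 ≤ 2 + 8 * exp 4 / (t + 1 / L) ^ 2 := by
  have hpos := lipConst_pos (zero_lt_one.trans_le hL) ht
  have hle := lipConst_le hL ht
  have hsq : (1 + 2 * exp 2 / (t + 1 / L)) ^ 2 ≤ 2 + 8 * exp 4 / (t + 1 / L) ^ 2 := by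
    have : 8 * exp 4 / (t + 1 / L) ^ 2 = 2 * (2 * exp 2 / (t + 1 / L)) ^ 2 := by
      have : exp 4 = exp 2 ^ 2 := by rw [sq, ← exp_add]; norm_num
      rw [this, div_pow]; ring
    rw [this]
    nlinarith [sq_nonneg (1 - 2 * exp 2 / (t + 1 / L))]
  exact (pow_le_pow_left₀ hpos.le hle 2).trans hsq

/-- `∫_τ^T L_t² dt ≲ T + 1/(τ + 1/L)` where `L_t = min{L e^{2t}, 1/(1-e^{-2t})}`. -/
theorem integral_Lt_sq_le : ∃ C : ℝ, 0 < C ∧ ∀ (L τ T : ℝ), 1 ≤ L → 0 < τ → τ ≤ 1 → 1 ≤ T →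
    (∫ t in τ..T, (min (L * Real.exp (2 * t)) (1 / (1 - Real.exp (-2 * t)))) ^ 2) ≤
      C * (T + 1 / (τ + 1 / L)) := by
  refine ⟨8 * exp 4, by positivity, fun L τ T hL hτ hτ1 hT => ?_⟩
  have hτT : τ ≤ T := hτ1.trans hT
  have hpos : ∀ t ∈ Set.uIcc τ T, 0 < t := fun t ht => hτ.trans_le (Set.uIcc_of_le hτT ▸ ht).1
  have hshift : ∀ t ∈ Set.uIcc τ T, t + 1 / L ≠ 0 := fun t ht =>
    (add_pos (hpos t ht) (by positivity)).ne'
  have hbound_int : IntervalIntegrable (fun t => 1 / (t + 1 / L) ^ 2) volume τ T :=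
    (continuousOn_const.div (by fun_prop) fun t ht => pow_ne_zero 2 (hshift t ht)).intervalIntegrable
  calc ∫ t in τ..T, lipConst L t ^ 2
      ≤ ∫ t in τ..T, (2 + 8 * exp 4 * (1 / (t + 1 / L) ^ 2)) := by
        refine intervalIntegral.integral_mono_on hτT
          (((continuousOn_lipConst L).mono fun t ht => hpos t ht).pow 2).intervalIntegrable
          (intervalIntegrable_const.add (hbound_int.const_mul _)) fun t ht => ?_
        rw [mul_one_div]
        exact lipConst_sq_le hL (hpos t (Set.Icc_subset_uIcc ht))
    _ = 2 * (T - τ) + 8 * exp 4 * (1 / (τ + 1 / L) - 1 / (T + 1 / L)) := by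
        rw [intervalIntegral.integral_add intervalIntegrable_const (hbound_int.const_mul _),
          intervalIntegral.integral_const, intervalIntegral.integral_const_mul,
          integral_one_div_add_sq hshift, smul_eq_mul, mul_comm]
    _ ≤ 8 * exp 4 * (T + 1 / (τ + 1 / L)) := by
        have : 1 ≤ exp 4 := one_le_exp (by norm_num)
        have : 0 < 1 / (T + 1 / L) := by positivity
        nlinarith
end
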